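/- arXiv:1409.5606 — 2 statements merged into one kernel-verified Lean document; each statement's English description precedes it below -/
import Mathlib

section
/- Let y = Φx + v with x K-sparse with support T. If min_{j∈T}|x_j| > ((√K + √L)√(1+δ_{L+K}) / (√L(1−δ_K) − √K δ_{L+K})) ‖v‖₂ and √L(1−δ_K) > √K δ_{L+K}, then max_{j∈T}|φ_j' y| is strictly larger than the L-th largest value of |φ_j' y| over j ∈ T^c; in particular, any algorithm selecting the L indices with largest correlations |φ_j' y| picks at least one index from T. -/
open Matrix Finset

noncomputable def l2 {n : Type*} [Fintype n] (x : n → ℝ) : ℝ :=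
  Real.sqrt (∑ i, (x i) ^ 2)

def Sparse {N : ℕ} (K : ℕ) (x : Fin N → ℝ) : Prop :=
  (Finset.univ.filter (fun i => x i ≠ 0)).card ≤ K

def RIP {M N : ℕ} (Φ : Matrix (Fin M) (Fin N) ℝ) (K : ℕ) (δ : ℝ) : Prop :=
  ∀ x : Fin N → ℝ, Sparse K x →
    (1 - δ) * (l2 x) ^ 2 ≤ (l2 (Φ.mulVec x)) ^ 2 ∧
    (l2 (Φ.mulVec x)) ^ 2 ≤ (1 + δ) * (l2 x) ^ 2

def colSub {M N : ℕ} (Φ : Matrix (Fin M) (Fin N) ℝ) (S : Finset (Fin N)) :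
    Matrix (Fin M) {i // i ∈ S} ℝ := fun r c => Φ r c.1

noncomputable def resid {M N : ℕ} (Φ : Matrix (Fin M) (Fin N) ℝ) (S : Finset (Fin N))
    (y : Fin M → ℝ) : Fin M → ℝ :=
  y - (colSub Φ S).mulVec
    ((((colSub Φ S)ᵀ * colSub Φ S)⁻¹).mulVec ((colSub Φ S)ᵀ.mulVec y))

def restr {N : ℕ} (x : Fin N → ℝ) (S : Finset (Fin N)) : {i // i ∈ S} → ℝ :=
  fun i => x i.1

lemma l2_sq {n : Type*} [Fintype n] (w : n → ℝ) : l2 w ^ 2 = ∑ i, w i ^ 2 :=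
  Real.sq_sqrt (Finset.sum_nonneg fun _ _ => sq_nonneg _)

lemma l2_nonneg' {n : Type*} [Fintype n] (w : n → ℝ) : 0 ≤ l2 w := Real.sqrt_nonneg _

lemma l2_eq_zero' {n : Type*} [Fintype n] (w : n → ℝ) (h : l2 w = 0) : ∀ i, w i = 0 := by
  have hs : ∑ i, w i ^ 2 = 0 := by
    have h2 : l2 w ^ 2 = 0 := by rw [h]; ring
    rw [l2_sq] at h2; exact h2
  intro i
  have := (Finset.sum_eq_zero_iff_of_nonneg (fun i _ => sq_nonneg (w i))).1 hs i (mem_univ i)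
  exact pow_eq_zero_iff (n := 2) (by norm_num) |>.1 this

lemma abs_inner_le {n : Type*} [Fintype n] (a b : n → ℝ) :
    |∑ i, a i * b i| ≤ l2 a * l2 b := by
  have h := Finset.sum_mul_sq_le_sq_mul_sq univ a b
  have := Real.sqrt_le_sqrt h
  rw [Real.sqrt_sq_eq_abs] at this
  calc |∑ i, a i * b i| ≤ Real.sqrt ((∑ i, a i ^ 2) * ∑ i, b i ^ 2) := this
    _ = l2 a * l2 b := by
        rw [Real.sqrt_mul (Finset.sum_nonneg fun i _ => sq_nonneg _)]; rfl

lemma sparse_of_subset {N m : ℕ} (x : Fin N → ℝ) (S : Finset (Fin N))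
    (h : ∀ i ∉ S, x i = 0) (hc : S.card ≤ m) : Sparse m x := by
  refine le_trans (Finset.card_le_card ?_) hc
  intro i hi
  simp only [mem_filter] at hi
  by_contra hiS
  exact hi.2 (h i hiS)

lemma rip_mulVec_le {M N m : ℕ} {Φ : Matrix (Fin M) (Fin N) ℝ} {δ : ℝ} (hδ : 0 ≤ δ)
    (h : RIP Φ m δ) (w : Fin N → ℝ) (hw : Sparse m w) :
    l2 (Φ.mulVec w) ≤ Real.sqrt (1 + δ) * l2 w := by
  have h1 := (h w hw).2
  have := Real.sqrt_le_sqrt h1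
  rw [Real.sqrt_sq (l2_nonneg' _)] at this
  calc l2 (Φ.mulVec w) ≤ Real.sqrt ((1 + δ) * l2 w ^ 2) := this
    _ = Real.sqrt (1 + δ) * l2 w := by
        rw [Real.sqrt_mul (by linarith), Real.sqrt_sq (l2_nonneg' _)]

lemma ip_mulVec {M N : ℕ} (Φ : Matrix (Fin M) (Fin N) ℝ) (w : Fin N → ℝ) (y : Fin M → ℝ) :
    ∑ r, Φ.mulVec w r * y r = ∑ j, w j * ∑ r, Φ r j * y r := by
  simp only [Matrix.mulVec, dotProduct, Finset.sum_mul, Finset.mul_sum]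
  rw [Finset.sum_comm]
  exact Finset.sum_congr rfl fun j _ => Finset.sum_congr rfl fun r _ => by ring

lemma cross_ip {M N m : ℕ} (Φ : Matrix (Fin M) (Fin N) ℝ) {δ : ℝ} (h : RIP Φ m δ)
    (u w : Fin N → ℝ) (hzero : ∀ j, u j * w j = 0)
    (hp : Sparse m (u + w)) (hm : Sparse m (u - w)) :
    ∑ r, Φ.mulVec u r * Φ.mulVec w r ≤ δ / 2 * ((l2 u) ^ 2 + (l2 w) ^ 2) := by
  have h1 := (h _ hp).2
  have h2 := (h _ hm).1
  have e1 : (l2 (u + w)) ^ 2 = (l2 u) ^ 2 + (l2 w) ^ 2 := by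
    simp only [l2_sq, Pi.add_apply, ← Finset.sum_add_distrib]
    refine Finset.sum_congr rfl fun j _ => ?_
    nlinarith [hzero j]
  have e2 : (l2 (u - w)) ^ 2 = (l2 u) ^ 2 + (l2 w) ^ 2 := by
    simp only [l2_sq, Pi.sub_apply, ← Finset.sum_add_distrib]
    refine Finset.sum_congr rfl fun j _ => ?_
    nlinarith [hzero j]
  have epol : (l2 (Φ.mulVec (u + w))) ^ 2 - (l2 (Φ.mulVec (u - w))) ^ 2
      = 4 * ∑ r, Φ.mulVec u r * Φ.mulVec w r := by
    rw [Matrix.mulVec_add, Matrix.mulVec_sub]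
    simp only [l2_sq, Pi.add_apply, Pi.sub_apply, ← Finset.sum_sub_distrib, Finset.mul_sum]
    exact Finset.sum_congr rfl fun r _ => by ring
  rw [e1] at h1
  rw [e2] at h2
  linarith

lemma cross_scaled {M N m : ℕ} (Φ : Matrix (Fin M) (Fin N) ℝ) {δ : ℝ} (hδ : 0 ≤ δ)
    (h : RIP Φ m δ) (u w : Fin N → ℝ) (S S' : Finset (Fin N))
    (hu : ∀ j ∉ S, u j = 0) (hw : ∀ j ∉ S', w j = 0)
    (hdisj : Disjoint S S') (hc : S.card + S'.card ≤ m) :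
    ∑ r, Φ.mulVec u r * Φ.mulVec w r ≤ δ * (l2 u * l2 w) := by
  have hzero : ∀ j, u j * w j = 0 := by
    intro j
    by_cases hj : j ∈ S
    · rw [hw j (Finset.disjoint_left.1 hdisj hj), mul_zero]
    · rw [hu j hj, zero_mul]
  have hcard : (S ∪ S').card ≤ m := le_trans (Finset.card_union_le _ _) hc
  have ha := l2_nonneg' u
  have hb := l2_nonneg' w
  rcases eq_or_lt_of_le ha with ha0 | ha0
  · have : u = 0 := funext (l2_eq_zero' u ha0.symm)
    rw [this, Matrix.mulVec_zero]
    simp only [Pi.zero_apply, zero_mul, Finset.sum_const_zero]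
    exact mul_nonneg hδ (mul_nonneg (l2_nonneg' _) (l2_nonneg' _))
  rcases eq_or_lt_of_le hb with hb0 | hb0
  · have : w = 0 := funext (l2_eq_zero' w hb0.symm)
    rw [this, Matrix.mulVec_zero]
    simp only [Pi.zero_apply, mul_zero, Finset.sum_const_zero]
    exact mul_nonneg hδ (mul_nonneg (l2_nonneg' _) (l2_nonneg' _))
  set a := l2 u
  set b := l2 w
  set t := Real.sqrt (b / a) with ht
  have ht0 : 0 < t := Real.sqrt_pos.2 (div_pos hb0 ha0)
  have ht2 : t ^ 2 = b / a := Real.sq_sqrt (le_of_lt (div_pos hb0 ha0))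
  set u' : Fin N → ℝ := fun j => t * u j with hu'
  set w' : Fin N → ℝ := fun j => t⁻¹ * w j with hw'
  have hzero' : ∀ j, u' j * w' j = 0 := by
    intro j; simp only [hu', hw']
    rw [mul_mul_mul_comm, hzero j, mul_zero]
  have hsupp' : ∀ j ∉ S ∪ S', (u' + w') j = 0 ∧ (u' - w') j = 0 := by
    intro j hj
    rw [Finset.mem_union] at hj; push_neg at hj
    simp [hu', hw', hu j hj.1, hw j hj.2]
  have hp : Sparse m (u' + w') :=
    sparse_of_subset _ (S ∪ S') (fun j hj => (hsupp' j hj).1) hcard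
  have hm : Sparse m (u' - w') :=
    sparse_of_subset _ (S ∪ S') (fun j hj => (hsupp' j hj).2) hcard
  have key := cross_ip Φ h u' w' hzero' hp hm
  have el2u : (l2 u') ^ 2 = t ^ 2 * a ^ 2 := by
    simp only [l2_sq, hu', mul_pow, ← Finset.mul_sum]
    rw [← l2_sq]
  have el2w : (l2 w') ^ 2 = (t⁻¹) ^ 2 * b ^ 2 := by
    simp only [l2_sq, hw', mul_pow, ← Finset.mul_sum]
    rw [← l2_sq]
  have eip : ∑ r, Φ.mulVec u' r * Φ.mulVec w' r = ∑ r, Φ.mulVec u r * Φ.mulVec w r := by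
    have eu : Φ.mulVec u' = fun r => t * Φ.mulVec u r := by
      funext r
      simp only [hu', Matrix.mulVec, dotProduct, Finset.mul_sum]
      exact Finset.sum_congr rfl fun j _ => by ring
    have ew : Φ.mulVec w' = fun r => t⁻¹ * Φ.mulVec w r := by
      funext r
      simp only [hw', Matrix.mulVec, dotProduct, Finset.mul_sum]
      exact Finset.sum_congr rfl fun j _ => by ring
    rw [eu, ew]
    refine Finset.sum_congr rfl fun r _ => ?_
    field_simp
  rw [eip, el2u, el2w, ht2] at key
  have hrhs : δ / 2 * (b / a * a ^ 2 + t⁻¹ ^ 2 * b ^ 2) = δ * (a * b) := by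
    have h3 : t⁻¹ ^ 2 = a / b := by rw [inv_pow, ht2, inv_div]
    rw [h3]
    field_simp
    ring
  rw [hrhs] at key
  exact key

lemma sum_sq_indicator {N : ℕ} (c : Fin N → ℝ) (S : Finset (Fin N)) :
    ∑ j, (if j ∈ S then c j else 0) ^ 2 = ∑ j ∈ S, c j ^ 2 := by
  rw [← Finset.sum_subset S.subset_univ (fun j _ hj => by simp [hj])]
  exact Finset.sum_congr rfl fun j hj => by simp [hj]

set_option maxHeartbeats 1000000 in
theorem preselection_success {M N K L : ℕ} (Φ : Matrix (Fin M) (Fin N) ℝ)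
    (x : Fin N → ℝ) (T : Finset (Fin N)) (v y : Fin M → ℝ)
    (hy : y = Φ.mulVec x + v) (hK : 1 ≤ K) (hL : 1 ≤ L) (hT : T.card = K)
    (hsupp : ∀ i, i ∉ T → x i = 0)
    (δK δL δLK : ℝ) (hδK0 : 0 ≤ δK) (hδK1 : δK < 1)
    (hδL0 : 0 ≤ δL) (hδL1 : δL < 1) (hδLK0 : 0 ≤ δLK) (hδLK1 : δLK < 1)
    (hRIPK : RIP Φ K δK) (hRIPL : RIP Φ L δL) (hRIPLK : RIP Φ (L + K) δLK)
    (hdenom : Real.sqrt K * δLK < Real.sqrt L * (1 - δK))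
    (hmin : ∀ j ∈ T,
      ((Real.sqrt K + Real.sqrt L) * Real.sqrt (1 + δLK) /
          (Real.sqrt L * (1 - δK) - Real.sqrt K * δLK)) * l2 v < |x j|) :
    ∀ I' : Finset (Fin N), Disjoint I' T → I'.card = L →
      ∃ j ∈ T, ∃ i ∈ I',
        |(fun r => Φ r i) ⬝ᵥ y| < |(fun r => Φ r j) ⬝ᵥ y| := by
  intro I' hdisjI hcardI
  by_contra hcon
  push_neg at hcon
  simp only [dotProduct] at hcon
  set c : Fin N → ℝ := fun j => ∑ r, Φ r j * y r with hc
  have hcj : ∀ j, c j = ∑ r, Φ r j * y r := fun j => rfl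
  clear_value c
  have hcon' : ∀ j ∈ T, ∀ i ∈ I', |c j| ≤ |c i| := by
    intro j hj i hi
    rw [hcj j, hcj i]
    exact hcon j hj i hi
  clear hcon
  -- basic constants
  set sK := Real.sqrt (K : ℝ) with hsK
  set sL := Real.sqrt (L : ℝ) with hsL
  set s := Real.sqrt (1 + δLK) with hs
  set X := l2 x with hX
  set V := l2 v with hV
  have hV0 : 0 ≤ V := by rw [hV]; exact l2_nonneg' v
  have hX0 : 0 ≤ X := by rw [hX]; exact l2_nonneg' x
  have hs0 : 0 ≤ s := by rw [hs]; exact Real.sqrt_nonneg _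
  have hsK1 : 1 ≤ sK := by
    rw [hsK, show (1:ℝ) = Real.sqrt 1 by simp]
    exact Real.sqrt_le_sqrt (by exact_mod_cast hK)
  have hsL0 : 0 < sL := by rw [hsL]; exact Real.sqrt_pos.2 (by exact_mod_cast hL)
  have hsK2 : sK ^ 2 = (K : ℝ) := by rw [hsK]; exact Real.sq_sqrt (Nat.cast_nonneg K)
  have hsL2 : sL ^ 2 = (L : ℝ) := by rw [hsL]; exact Real.sq_sqrt (Nat.cast_nonneg L)
  have hXsq : X ^ 2 = ∑ j, x j ^ 2 := by rw [hX]; exact l2_sq x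
  have hsK0 : 0 < sK := lt_of_lt_of_le one_pos hsK1
  clear_value sK sL s X V
  set d := sL * (1 - δK) - sK * δLK with hd
  have hd0 : 0 < d := by rw [hd]; linarith
  set C := (sK + sL) * s / d with hCdef
  have hC0 : 0 ≤ C := by
    rw [hCdef]
    exact div_nonneg (mul_nonneg (by positivity) hs0) (le_of_lt hd0)
  have hCd : C * d = (sK + sL) * s := by
    rw [hCdef]; exact div_mul_cancel₀ _ (ne_of_gt hd0)
  clear_value d C
  -- T nonempty and max over T
  have hTne : T.Nonempty := Finset.card_pos.1 (by rw [hT]; omega)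
  obtain ⟨j0, hj0T, hj0max⟩ := Finset.exists_max_image T (fun j => |c j|) hTne
  set A := |c j0| with hA
  have hA0 : 0 ≤ A := by rw [hA]; exact abs_nonneg _
  clear_value A
  -- sparsity of x
  have hxK : Sparse K x := sparse_of_subset x T hsupp (le_of_eq hT)
  have hxLK : Sparse (L + K) x := sparse_of_subset x T hsupp (by rw [hT]; omega)
  -- X > sK * C * V
  have hXlb : sK * (C * V) < X := by
    have hterm : ∀ j ∈ T, (C * V) ^ 2 < x j ^ 2 := by
      intro j hj
      have h1 := hmin j hj
      have h2 : 0 ≤ C * V := mul_nonneg hC0 hV0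
      nlinarith [abs_nonneg (x j), sq_abs (x j)]
    have hsum : (K : ℝ) * (C * V) ^ 2 < X ^ 2 := by
      calc (K : ℝ) * (C * V) ^ 2 = ∑ _j ∈ T, (C * V) ^ 2 := by
            rw [Finset.sum_const, hT, nsmul_eq_mul]
        _ < ∑ j ∈ T, x j ^ 2 := Finset.sum_lt_sum_of_nonempty hTne hterm
        _ = X ^ 2 := by
            rw [hXsq]
            exact Finset.sum_subset T.subset_univ fun i _ hi => by rw [hsupp i hi]; ring
    have hsq : (sK * (C * V)) ^ 2 < X ^ 2 := by
      rw [mul_pow, hsK2]; exact hsum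
    exact lt_of_pow_lt_pow_left₀ 2 hX0 hsq
  have hXpos : 0 < X :=
    lt_of_le_of_lt (mul_nonneg (le_of_lt hsK0) (mul_nonneg hC0 hV0)) hXlb
  -- Bound (i): (1-δK) * X - s * V ≤ sK * A
  have hboundi : (1 - δK) * X - s * V ≤ sK * A := by
    set cT : Fin N → ℝ := fun j => if j ∈ T then c j else 0 with hcT
    have hcTj : ∀ j, cT j = if j ∈ T then c j else 0 := fun j => rfl
    clear_value cT
    have hl2cT : l2 cT ≤ sK * A := by
      have h1 : (l2 cT) ^ 2 ≤ (sK * A) ^ 2 := by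
        rw [l2_sq, mul_pow, hsK2]
        have e : ∑ j, cT j ^ 2 = ∑ j ∈ T, c j ^ 2 := by
          simp only [hcTj]
          exact sum_sq_indicator c T
        rw [e]
        calc ∑ j ∈ T, c j ^ 2 ≤ ∑ _j ∈ T, A ^ 2 := by
              refine Finset.sum_le_sum fun j hj => ?_
              have := hj0max j hj
              nlinarith [sq_abs (c j), abs_nonneg (c j)]
          _ = (K : ℝ) * A ^ 2 := by rw [Finset.sum_const, hT, nsmul_eq_mul]
      exact le_of_pow_le_pow_left₀ two_ne_zero (mul_nonneg (le_of_lt hsK0) hA0) h1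
    have hxc : ∑ j, x j * c j = ∑ j, x j * cT j := by
      refine Finset.sum_congr rfl fun j _ => ?_
      rw [hcTj]
      by_cases hj : j ∈ T
      · simp [hj]
      · rw [hsupp j hj]; simp
    have hip : ∑ r, Φ.mulVec x r * y r = ∑ j, x j * c j := by
      simp only [hcj]
      exact ip_mulVec Φ x y
    have hdecomp : ∑ r, Φ.mulVec x r * y r
        = (l2 (Φ.mulVec x)) ^ 2 + ∑ r, Φ.mulVec x r * v r := by
      rw [hy, l2_sq, ← Finset.sum_add_distrib]
      exact Finset.sum_congr rfl fun r _ => by simp only [Pi.add_apply]; ring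
    have hlow : (1 - δK) * X ^ 2 ≤ (l2 (Φ.mulVec x)) ^ 2 := by
      rw [hX]; exact (hRIPK x hxK).1
    have hPhix : l2 (Φ.mulVec x) ≤ s * X := by
      rw [hs, hX]; exact rip_mulVec_le hδLK0 hRIPLK x hxLK
    have hv : -(s * X * V) ≤ ∑ r, Φ.mulVec x r * v r := by
      have h1 := abs_inner_le (Φ.mulVec x) v
      rw [← hV] at h1
      have h2 : l2 (Φ.mulVec x) * V ≤ s * X * V :=
        mul_le_mul_of_nonneg_right hPhix hV0
      have h3 := neg_abs_le (∑ r, Φ.mulVec x r * v r)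
      linarith
    have hup : ∑ j, x j * cT j ≤ X * (sK * A) := by
      have h1 := abs_inner_le x cT
      rw [← hX] at h1
      have h2 : X * l2 cT ≤ X * (sK * A) := mul_le_mul_of_nonneg_left hl2cT hX0
      linarith [le_abs_self (∑ j, x j * cT j)]
    have hchain : X * ((1 - δK) * X - s * V) ≤ X * (sK * A) := by
      have e : X * ((1 - δK) * X - s * V) = (1 - δK) * X ^ 2 - s * X * V := by ring
      rw [e]
      linarith [hip, hdecomp, hlow, hv, hxc, hup]
    exact le_of_mul_le_mul_left hchain hXpos
  -- Bound (ii): sL * A ≤ δLK * X + s * V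
  have hboundii : sL * A ≤ δLK * X + s * V := by
    set u : Fin N → ℝ := fun i => if i ∈ I' then c i else 0 with hu
    have huj : ∀ i, u i = if i ∈ I' then c i else 0 := fun i => rfl
    clear_value u
    have husupp : ∀ i ∉ I', u i = 0 := fun i hi => by rw [huj]; simp [hi]
    have hl2u2 : (l2 u) ^ 2 = ∑ i ∈ I', c i ^ 2 := by
      rw [l2_sq]
      simp only [huj]
      exact sum_sq_indicator c I'
    have hLA : sL * A ≤ l2 u := by
      have h1 : (sL * A) ^ 2 ≤ (l2 u) ^ 2 := by
        rw [hl2u2, mul_pow, hsL2]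
        calc (L : ℝ) * A ^ 2 = ∑ _i ∈ I', A ^ 2 := by
              rw [Finset.sum_const, hcardI, nsmul_eq_mul]
          _ ≤ ∑ i ∈ I', c i ^ 2 := by
              refine Finset.sum_le_sum fun i hi => ?_
              have h2 := hcon' j0 hj0T i hi
              rw [← hA] at h2
              nlinarith [sq_abs (c i), hA0]
      exact le_of_pow_le_pow_left₀ two_ne_zero (l2_nonneg' u) h1
    have hip : ∑ r, Φ.mulVec u r * y r = (l2 u) ^ 2 := by
      rw [ip_mulVec Φ u y, hl2u2]
      rw [← Finset.sum_subset I'.subset_univ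
        (fun i _ hi => by rw [husupp i hi, zero_mul])]
      refine Finset.sum_congr rfl fun i hi => ?_
      rw [huj, hcj]
      simp [hi]
      ring
    have hdecomp : ∑ r, Φ.mulVec u r * y r
        = ∑ r, Φ.mulVec u r * Φ.mulVec x r + ∑ r, Φ.mulVec u r * v r := by
      rw [hy, ← Finset.sum_add_distrib]
      exact Finset.sum_congr rfl fun r _ => by simp only [Pi.add_apply]; ring
    have hcross : ∑ r, Φ.mulVec u r * Φ.mulVec x r ≤ δLK * (l2 u * X) := by
      rw [hX]
      refine cross_scaled Φ hδLK0 hRIPLK u x I' T husupp hsupp hdisjI ?_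
      rw [hcardI, hT]
    have huLK : Sparse (L + K) u := sparse_of_subset u I' husupp (by rw [hcardI]; omega)
    have hPhiu : l2 (Φ.mulVec u) ≤ s * l2 u := by
      rw [hs]; exact rip_mulVec_le hδLK0 hRIPLK u huLK
    have hv : ∑ r, Φ.mulVec u r * v r ≤ s * l2 u * V := by
      have h1 := abs_inner_le (Φ.mulVec u) v
      rw [← hV] at h1
      have h2 : l2 (Φ.mulVec u) * V ≤ s * l2 u * V :=
        mul_le_mul_of_nonneg_right hPhiu hV0
      linarith [le_abs_self (∑ r, Φ.mulVec u r * v r)]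
    have hkey : (l2 u) ^ 2 ≤ l2 u * (δLK * X + s * V) := by
      rw [← hip, hdecomp]
      nlinarith [hcross, hv]
    have hR0 : 0 ≤ δLK * X + s * V := by
      have := mul_nonneg hδLK0 hX0
      have := mul_nonneg hs0 hV0
      linarith
    rcases eq_or_lt_of_le (l2_nonneg' u) with h0 | h0
    · calc sL * A ≤ l2 u := hLA
        _ = 0 := h0.symm
        _ ≤ _ := hR0
    · have h4 : l2 u ≤ δLK * X + s * V := le_of_mul_le_mul_left
        (by calc l2 u * l2 u = l2 u ^ 2 := by ring
              _ ≤ l2 u * (δLK * X + s * V) := hkey) h0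
      linarith [hLA]
  -- combine for contradiction
  have hfin : d * X ≤ (sK + sL) * s * V := by
    have h1 : sL * ((1 - δK) * X - s * V) ≤ sL * (sK * A) :=
      mul_le_mul_of_nonneg_left hboundi (le_of_lt hsL0)
    have h2 : sK * (sL * A) ≤ sK * (δLK * X + s * V) :=
      mul_le_mul_of_nonneg_left hboundii (le_of_lt hsK0)
    rw [hd]
    nlinarith [h1, h2]
  have hcontra : (sK + sL) * s * V < d * X := by
    have h1 : d * (sK * (C * V)) < d * X := mul_lt_mul_of_pos_left hXlb hd0
    have h2 : d * (sK * (C * V)) = sK * ((sK + sL) * s) * V := by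
      rw [← hCd]; ring
    have h3 : (sK + sL) * s * V ≤ sK * ((sK + sL) * s) * V := by
      nlinarith [mul_nonneg (mul_nonneg (by positivity : (0:ℝ) ≤ sK + sL) hs0) hV0]
    linarith
  linarith
end

section
/- Let y = Φx + v with x K-sparse with support T, and let S ⊂ T. Then α := max_{j ∈ T^c} |φ_j' r_S| satisfies α ≤ (δ_{K+1} + δ_{K+1}δ_K/(1−δ_K)) ‖x_{T∖S}‖₂ + √(1+δ_M)‖v‖₂, where r_S = P_S^⊥ y. -/
/-!
Write `x = x_S + x₂` with `x₂ = x_{T∖S}`. Since `P_S^⊥` annihilates `Φ_S x_S`,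
`φ_j' r_S = φ_j' Φ x₂ - φ_j' Φ_S w + φ_j' P_S^⊥ v` with `w = (Φ_S'Φ_S)⁻¹ Φ_S' Φ x₂`.
By polarization, the RIP of order `r` gives `|⟨Φu, Φw⟩| ≤ δ_r ‖u‖ ‖w‖` for disjointly supported
`u, w` with `r` entries in total. This bounds the first term by `δ_{K+1} ‖x₂‖`, and
`‖Φ_S' Φ x₂‖` by `δ_K ‖x₂‖`; as `Φ_S'Φ_S ≥ (1 - δ_K) I`, the second term is at most
`δ_{K+1} δ_K ‖x₂‖ / (1 - δ_K)`.
The last term is at most `‖φ_j‖ ‖v‖ ≤ √(1 + δ_M) ‖v‖`, because `P_S^⊥` is a contraction.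
-/

open Matrix Finset

section L2

variable {n : Type*} [Fintype n]

lemma l2_eq_norm (x : n → ℝ) : l2 x = ‖WithLp.toLp 2 x‖ := by
  simp [l2, EuclideanSpace.norm_eq]

lemma dotProduct_eq_inner (x y : n → ℝ) :
    x ⬝ᵥ y = inner ℝ (WithLp.toLp 2 x) (WithLp.toLp 2 y) := by
  simp [EuclideanSpace.inner_toLp_toLp, dotProduct_comm]

lemma l2_nonneg (x : n → ℝ) : 0 ≤ l2 x := Real.sqrt_nonneg _

lemma dotProduct_self_eq_l2_sq (x : n → ℝ) : x ⬝ᵥ x = l2 x ^ 2 := by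
  rw [dotProduct_eq_inner, real_inner_self_eq_norm_sq, l2_eq_norm]

lemma abs_dotProduct_le_l2_mul_l2 (x y : n → ℝ) : |x ⬝ᵥ y| ≤ l2 x * l2 y := by
  rw [dotProduct_eq_inner, l2_eq_norm, l2_eq_norm]
  exact abs_real_inner_le_norm _ _

lemma l2_smul (c : ℝ) (x : n → ℝ) : l2 (c • x) = |c| * l2 x := by
  rw [l2_eq_norm, l2_eq_norm, WithLp.toLp_smul, norm_smul, Real.norm_eq_abs]

lemma l2_eq_zero {x : n → ℝ} : l2 x = 0 ↔ x = 0 := by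
  rw [l2_eq_norm, norm_eq_zero, WithLp.toLp_eq_zero]

lemma l2_single_one [DecidableEq n] (j : n) : l2 (Pi.single j (1 : ℝ)) = 1 := by
  rw [l2_eq_norm, PiLp.toLp_single, PiLp.norm_single, norm_one]

end L2

section Support

variable {N : ℕ} {U W : Finset (Fin N)} {u w : Fin N → ℝ}

lemma sparse_of_support_subset {K : ℕ} (hu : ∀ i ∉ U, u i = 0) (hU : U.card ≤ K) :
    Sparse K u := by
  unfold Sparse
  refine (card_le_card fun i hi => ?_).trans hU
  by_contra hiU
  exact (mem_filter.1 hi).2 (hu i hiU)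

lemma dotProduct_eq_zero_of_disjoint (hu : ∀ i ∉ U, u i = 0) (hw : ∀ i ∉ W, w i = 0)
    (hUW : Disjoint U W) : u ⬝ᵥ w = 0 :=
  sum_eq_zero fun i _ => by
    by_cases hi : i ∈ U
    · simp [hw i (disjoint_left.1 hUW hi)]
    · simp [hu i hi]

lemma single_eq_zero_of_not_mem_singleton (j : Fin N) (a : ℝ) :
    ∀ i ∉ ({j} : Finset (Fin N)), (Pi.single j a : Fin N → ℝ) i = 0 := fun i hi => by
  rw [mem_singleton] at hi
  simp [hi]

end Support

namespace RIP

variable {M N r : ℕ} {Φ : Matrix (Fin M) (Fin N) ℝ} {δ : ℝ} {U W : Finset (Fin N)}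
  {u w : Fin N → ℝ}

lemma abs_dotProduct_le_half (h : RIP Φ r δ) (hu : ∀ i ∉ U, u i = 0)
    (hw : ∀ i ∉ W, w i = 0) (hUW : Disjoint U W) (hr : (U ∪ W).card ≤ r) :
    |Φ *ᵥ u ⬝ᵥ Φ *ᵥ w| ≤ δ / 2 * (l2 u ^ 2 + l2 w ^ 2) := by
  have hsupp : ∀ c : ℝ, ∀ i ∉ U ∪ W, (u + c • w) i = 0 := fun c i hi => by
    rw [mem_union, not_or] at hi
    simp [hu i hi.1, hw i hi.2]
  have horth : u ⬝ᵥ w = 0 := dotProduct_eq_zero_of_disjoint hu hw hUW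
  have hnorm : ∀ c : ℝ, c ^ 2 = 1 → l2 (u + c • w) ^ 2 = l2 u ^ 2 + l2 w ^ 2 := by
    intro c hc
    simp only [← dotProduct_self_eq_l2_sq, add_dotProduct, dotProduct_add, smul_dotProduct,
      dotProduct_smul, dotProduct_comm w u, horth, smul_eq_mul]
    linear_combination (w ⬝ᵥ w) * hc
  have hexpand : ∀ c : ℝ, l2 (Φ *ᵥ (u + c • w)) ^ 2 =
      l2 (Φ *ᵥ u) ^ 2 + 2 * c * (Φ *ᵥ u ⬝ᵥ Φ *ᵥ w) + c ^ 2 * l2 (Φ *ᵥ w) ^ 2 := by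
    intro c
    simp only [← dotProduct_self_eq_l2_sq, mulVec_add, mulVec_smul, add_dotProduct,
      dotProduct_add, smul_dotProduct, dotProduct_smul, dotProduct_comm (Φ *ᵥ w), smul_eq_mul]
    ring
  have hplus := h _ (sparse_of_support_subset (hsupp 1) hr)
  have hminus := h _ (sparse_of_support_subset (hsupp (-1)) hr)
  rw [hexpand, hnorm 1 (by norm_num)] at hplus
  rw [hexpand, hnorm (-1) (by norm_num)] at hminus
  rw [abs_le]
  constructor <;> linarith [hplus.1, hplus.2, hminus.1, hminus.2]

lemma abs_dotProduct_le (h : RIP Φ r δ) (hu : ∀ i ∉ U, u i = 0)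
    (hw : ∀ i ∉ W, w i = 0) (hUW : Disjoint U W) (hr : (U ∪ W).card ≤ r) :
    |Φ *ᵥ u ⬝ᵥ Φ *ᵥ w| ≤ δ * l2 u * l2 w := by
  -- polarization applied to `‖w‖ • u` and `‖u‖ • w`, which have the same norm `‖u‖ ‖w‖`
  have hscaled := h.abs_dotProduct_le_half (u := l2 w • u) (w := l2 u • w)
    (fun i hi => by simp [hu i hi]) (fun i hi => by simp [hw i hi]) hUW hr
  rw [l2_smul, l2_smul, abs_of_nonneg (l2_nonneg w), abs_of_nonneg (l2_nonneg u), mulVec_smul,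
    mulVec_smul, smul_dotProduct, dotProduct_smul, smul_eq_mul, smul_eq_mul, abs_mul, abs_mul,
    abs_of_nonneg (l2_nonneg w), abs_of_nonneg (l2_nonneg u)] at hscaled
  rcases (mul_nonneg (l2_nonneg u) (l2_nonneg w)).eq_or_lt with hab | hab
  · have hzero : Φ *ᵥ u ⬝ᵥ Φ *ᵥ w = 0 := by
      rcases mul_eq_zero.1 hab.symm with hu0 | hw0
      · simp [l2_eq_zero.1 hu0]
      · simp [l2_eq_zero.1 hw0]
    rw [hzero, mul_assoc, ← hab]
    simp
  · refine le_of_mul_le_mul_left ?_ hab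
    linear_combination hscaled

end RIP

section ZeroExtend

variable {N : ℕ} {S : Finset (Fin N)}

noncomputable def zeroExtend (S : Finset (Fin N)) (z : {i // i ∈ S} → ℝ) : Fin N → ℝ :=
  fun i => if h : i ∈ S then z ⟨i, h⟩ else 0

lemma zeroExtend_of_not_mem (z : {i // i ∈ S} → ℝ) {i : Fin N} (hi : i ∉ S) :
    zeroExtend S z i = 0 :=
  dif_neg hi

lemma sum_zeroExtend {f : Fin N → ℝ → ℝ} (hf : ∀ i, f i 0 = 0) (z : {i // i ∈ S} → ℝ) :
    ∑ i, f i (zeroExtend S z i) = ∑ c : {i // i ∈ S}, f c (z c) := by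
  rw [← sum_subset (subset_univ S) fun i _ hi => by rw [zeroExtend_of_not_mem z hi, hf],
    ← sum_coe_sort S]
  exact sum_congr rfl fun c _ => by simp [zeroExtend]

lemma l2_zeroExtend (z : {i // i ∈ S} → ℝ) : l2 (zeroExtend S z) = l2 z := by
  unfold l2
  rw [sum_zeroExtend (f := fun _ t => t ^ 2) (fun _ => zero_pow two_ne_zero)]

lemma colSub_mulVec {M : ℕ} (Φ : Matrix (Fin M) (Fin N) ℝ) (z : {i // i ∈ S} → ℝ) :
    colSub Φ S *ᵥ z = Φ *ᵥ zeroExtend S z := by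
  ext r
  simp only [mulVec, dotProduct]
  rw [sum_zeroExtend (f := fun i t => Φ r i * t) (fun _ => mul_zero _)]
  rfl

lemma dotProduct_colSub_transpose_mulVec {M : ℕ} (Φ : Matrix (Fin M) (Fin N) ℝ)
    (z : {i // i ∈ S} → ℝ) (u : Fin M → ℝ) :
    z ⬝ᵥ (colSub Φ S)ᵀ *ᵥ u = Φ *ᵥ zeroExtend S z ⬝ᵥ u := by
  rw [dotProduct_mulVec, vecMul_transpose, colSub_mulVec]

lemma zeroExtend_restr_add_zeroExtend_restr_sdiff {T : Finset (Fin N)} {x : Fin N → ℝ}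
    (hx : ∀ i, i ∉ T → x i = 0) :
    zeroExtend S (restr x S) + zeroExtend (T \ S) (restr x (T \ S)) = x := by
  ext i
  by_cases hiS : i ∈ S
  · simp [zeroExtend, restr, hiS]
  · by_cases hiT : i ∈ T <;> simp [zeroExtend, restr, hiS, hiT, hx]

end ZeroExtend

section Coercive

variable {ι : Type*} [Fintype ι] [DecidableEq ι] {G : Matrix ι ι ℝ} {c : ℝ}

lemma isUnit_of_coercive (hc : 0 < c) (hG : ∀ z, c * l2 z ^ 2 ≤ z ⬝ᵥ G *ᵥ z) : IsUnit G := by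
  rw [← mulVec_injective_iff_isUnit]
  intro z₁ z₂ hz
  have hle := hG (z₁ - z₂)
  rw [mulVec_sub, hz, sub_self, dotProduct_zero] at hle
  have hsq : l2 (z₁ - z₂) ^ 2 = 0 := le_antisymm (by nlinarith) (sq_nonneg _)
  exact sub_eq_zero.1 (l2_eq_zero.1 (pow_eq_zero_iff two_ne_zero |>.1 hsq))

lemma l2_inv_mulVec_le_of_coercive (hc : 0 < c) (hG : ∀ z, c * l2 z ^ 2 ≤ z ⬝ᵥ G *ᵥ z)
    (q : ι → ℝ) : l2 (G⁻¹ *ᵥ q) ≤ l2 q / c := by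
  set w := G⁻¹ *ᵥ q
  have hGw : G *ᵥ w = q := by
    rw [mulVec_mulVec, mul_nonsing_inv _ ((isUnit_iff_isUnit_det G).1 (isUnit_of_coercive hc hG)),
      one_mulVec]
  have hle : c * l2 w ^ 2 ≤ l2 w * l2 q := by
    calc c * l2 w ^ 2 ≤ w ⬝ᵥ G *ᵥ w := hG w
      _ = w ⬝ᵥ q := by rw [hGw]
      _ ≤ l2 w * l2 q := (le_abs_self _).trans (abs_dotProduct_le_l2_mul_l2 w q)
  rw [le_div_iff₀ hc]
  rcases (l2_nonneg w).eq_or_lt with hw | hw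
  · rw [← hw, zero_mul]
    exact l2_nonneg q
  · nlinarith

end Coercive

section Residual

variable {M N : ℕ} {Φ : Matrix (Fin M) (Fin N) ℝ} {S : Finset (Fin N)}

lemma resid_add (u u' : Fin M → ℝ) : resid Φ S (u + u') = resid Φ S u + resid Φ S u' := by
  simp only [resid, mulVec_add]
  abel

lemma resid_colSub_mulVec (hG : IsUnit ((colSub Φ S)ᵀ * colSub Φ S)) (z : {i // i ∈ S} → ℝ) :
    resid Φ S (colSub Φ S *ᵥ z) = 0 := by
  rw [resid, mulVec_mulVec z, mulVec_mulVec z, nonsing_inv_mul _ ((isUnit_iff_isUnit_det _).1 hG),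
    one_mulVec, sub_self]

lemma l2_resid_le (hG : IsUnit ((colSub Φ S)ᵀ * colSub Φ S)) (u : Fin M → ℝ) :
    l2 (resid Φ S u) ≤ l2 u := by
  set A := colSub Φ S
  set w := (Aᵀ * A)⁻¹ *ᵥ (Aᵀ *ᵥ u)
  have hGw : (Aᵀ * A) *ᵥ w = Aᵀ *ᵥ u := by
    rw [mulVec_mulVec, mul_nonsing_inv _ ((isUnit_iff_isUnit_det _).1 hG), one_mulVec]
  -- `A w` is the orthogonal projection of `u`: both `u ⬝ A w` and `‖A w‖²` equal `Aᵀ u ⬝ w`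
  have hcross : u ⬝ᵥ A *ᵥ w = Aᵀ *ᵥ u ⬝ᵥ w := by
    rw [dotProduct_mulVec, ← mulVec_transpose]
  have hproj : A *ᵥ w ⬝ᵥ A *ᵥ w = Aᵀ *ᵥ u ⬝ᵥ w := by
    rw [dotProduct_mulVec, ← mulVec_transpose, mulVec_mulVec, hGw]
  have hsq : l2 (resid Φ S u) ^ 2 = l2 u ^ 2 - l2 (A *ᵥ w) ^ 2 := by
    change l2 (u - A *ᵥ w) ^ 2 = _
    simp only [← dotProduct_self_eq_l2_sq, sub_dotProduct, dotProduct_sub,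
      dotProduct_comm (A *ᵥ w) u]
    rw [hcross, hproj]
    ring
  nlinarith [l2_nonneg (resid Φ S u), l2_nonneg u, sq_nonneg (l2 (A *ᵥ w))]

lemma resid_mulVec_add_of_support (hG : IsUnit ((colSub Φ S)ᵀ * colSub Φ S))
    {T : Finset (Fin N)} {x : Fin N → ℝ} (hx : ∀ i, i ∉ T → x i = 0) (v : Fin M → ℝ) :
    let x₂ := zeroExtend (T \ S) (restr x (T \ S))
    resid Φ S (Φ *ᵥ x + v) = Φ *ᵥ x₂ -
      Φ *ᵥ zeroExtend S (((colSub Φ S)ᵀ * colSub Φ S)⁻¹ *ᵥ ((colSub Φ S)ᵀ *ᵥ (Φ *ᵥ x₂))) +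
        resid Φ S v := by
  intro x₂
  rw [← zeroExtend_restr_add_zeroExtend_restr_sdiff (S := S) hx, mulVec_add,
    ← colSub_mulVec Φ (restr x S), resid_add, resid_add, resid_colSub_mulVec hG, zero_add, resid,
    colSub_mulVec]

end Residual

namespace RIP

variable {M N r : ℕ} {Φ : Matrix (Fin M) (Fin N) ℝ} {δ : ℝ} {S W : Finset (Fin N)}
  {u : Fin N → ℝ}

lemma gram_coercive (h : RIP Φ r δ) (hS : S.card ≤ r) (z : {i // i ∈ S} → ℝ) :
    (1 - δ) * l2 z ^ 2 ≤ z ⬝ᵥ ((colSub Φ S)ᵀ * colSub Φ S) *ᵥ z := by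
  rw [← mulVec_mulVec, dotProduct_colSub_transpose_mulVec, colSub_mulVec,
    dotProduct_self_eq_l2_sq, ← l2_zeroExtend z]
  exact (h _ (sparse_of_support_subset (fun _ hi => zeroExtend_of_not_mem z hi) hS)).1

lemma l2_colSub_transpose_mulVec_le (h : RIP Φ r δ) (hδ : 0 ≤ δ) (hu : ∀ i ∉ W, u i = 0)
    (hSW : Disjoint S W) (hr : (S ∪ W).card ≤ r) :
    l2 ((colSub Φ S)ᵀ *ᵥ (Φ *ᵥ u)) ≤ δ * l2 u := by
  set q := (colSub Φ S)ᵀ *ᵥ (Φ *ᵥ u)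
  have hle : l2 q ^ 2 ≤ δ * l2 q * l2 u := by
    calc l2 q ^ 2 = Φ *ᵥ zeroExtend S q ⬝ᵥ Φ *ᵥ u := by
          rw [← dotProduct_self_eq_l2_sq, dotProduct_colSub_transpose_mulVec]
      _ ≤ δ * l2 (zeroExtend S q) * l2 u :=
          (le_abs_self _).trans <|
            h.abs_dotProduct_le (fun _ hi => zeroExtend_of_not_mem q hi) hu hSW hr
      _ = δ * l2 q * l2 u := by rw [l2_zeroExtend]
  rcases (l2_nonneg q).eq_or_lt with hq | hq
  · rw [← hq]
    exact mul_nonneg hδ (l2_nonneg u)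
  · nlinarith

lemma abs_col_dotProduct_le (h : RIP Φ r δ) {j : Fin N} (hj : j ∉ W) (hu : ∀ i ∉ W, u i = 0)
    (hr : (insert j W).card ≤ r) : |Φ *ᵥ Pi.single j 1 ⬝ᵥ Φ *ᵥ u| ≤ δ * l2 u := by
  have := h.abs_dotProduct_le (single_eq_zero_of_not_mem_singleton j 1) hu
    (disjoint_singleton_left.2 hj) (insert_eq j W ▸ hr)
  rwa [l2_single_one, mul_one] at this

lemma l2_col_le (h : RIP Φ M δ) (j : Fin N) : l2 (Φ *ᵥ Pi.single j 1) ≤ √(1 + δ) := by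
  rcases Nat.eq_zero_or_pos M with rfl | hM
  · simp [l2]
  · have hle := (h _ (sparse_of_support_subset (single_eq_zero_of_not_mem_singleton j 1)
      (card_singleton j ▸ hM))).2
    rw [l2_single_one, one_pow, mul_one] at hle
    simpa [abs_of_nonneg (l2_nonneg _)] using Real.abs_le_sqrt hle

end RIP

theorem alpha_upper_bound_general {M N K : ℕ} (Φ : Matrix (Fin M) (Fin N) ℝ)
    (x : Fin N → ℝ) (T S : Finset (Fin N)) (v y : Fin M → ℝ)
    (hy : y = Φ.mulVec x + v) (hT : T.card = K) (hsupp : ∀ i, i ∉ T → x i = 0)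
    (hS : S ⊂ T) (δK δK1 δM : ℝ) (hδK0 : 0 ≤ δK) (hδK1 : δK < 1)
    (hδK10 : 0 ≤ δK1)
    (hRIPK : RIP Φ K δK) (hRIPK1 : RIP Φ (K + 1) δK1) (hRIPM : RIP Φ M δM) :
    ∀ j, j ∉ T →
      |(fun i => Φ i j) ⬝ᵥ resid Φ S y| ≤
        (δK1 + δK1 * δK / (1 - δK)) * l2 (restr x (T \ S)) +
          Real.sqrt (1 + δM) * l2 v := by
  intro j hj
  have hST : S ⊆ T := hS.subset
  have hSK : S.card ≤ K := hT ▸ card_le_card hST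
  have hgram := hRIPK.gram_coercive hSK
  have hG := isUnit_of_coercive (sub_pos.2 hδK1) hgram
  rw [← l2_zeroExtend (restr x (T \ S)), hy, resid_mulVec_add_of_support hG hsupp,
    show (fun i => Φ i j) = Φ *ᵥ Pi.single j 1 from (mulVec_single_one Φ j).symm]
  set φ := Φ *ᵥ Pi.single j 1
  set x₂ := zeroExtend (T \ S) (restr x (T \ S))
  have hx₂ : ∀ i ∉ T \ S, x₂ i = 0 := fun _ hi => zeroExtend_of_not_mem _ hi
  set w := ((colSub Φ S)ᵀ * colSub Φ S)⁻¹ *ᵥ ((colSub Φ S)ᵀ *ᵥ (Φ *ᵥ x₂))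
  have h₁ : |φ ⬝ᵥ Φ *ᵥ x₂| ≤ δK1 * l2 x₂ :=
    hRIPK1.abs_col_dotProduct_le (fun h => hj (sdiff_subset h)) hx₂
      ((card_insert_le _ _).trans (Nat.succ_le_succ (hT ▸ card_le_card sdiff_subset)))
  have hw : l2 w ≤ δK * l2 x₂ / (1 - δK) :=
    (l2_inv_mulVec_le_of_coercive (sub_pos.2 hδK1) hgram _).trans <|
      div_le_div_of_nonneg_right (hRIPK.l2_colSub_transpose_mulVec_le hδK0 hx₂ disjoint_sdiff
        (by rw [union_sdiff_of_subset hST, hT])) (sub_pos.2 hδK1).le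
  have h₂ : |φ ⬝ᵥ Φ *ᵥ zeroExtend S w| ≤ δK1 * (δK * l2 x₂ / (1 - δK)) := by
    refine (hRIPK1.abs_col_dotProduct_le (fun h => hj (hST h))
      (fun _ hi => zeroExtend_of_not_mem w hi)
      ((card_insert_le _ _).trans (Nat.succ_le_succ hSK))).trans ?_
    rw [l2_zeroExtend]
    exact mul_le_mul_of_nonneg_left hw hδK10
  have h₃ : |φ ⬝ᵥ resid Φ S v| ≤ √(1 + δM) * l2 v :=
    (abs_dotProduct_le_l2_mul_l2 _ _).trans <|
      mul_le_mul (hRIPM.l2_col_le j) (l2_resid_le hG v) (l2_nonneg _) (Real.sqrt_nonneg _)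
  rw [dotProduct_add, dotProduct_sub]
  calc _ ≤ |φ ⬝ᵥ Φ *ᵥ x₂| + |φ ⬝ᵥ Φ *ᵥ zeroExtend S w| + |φ ⬝ᵥ resid Φ S v| :=
        (abs_add_le _ _).trans (add_le_add_left (abs_sub _ _) _)
    _ ≤ δK1 * l2 x₂ + δK1 * (δK * l2 x₂ / (1 - δK)) + √(1 + δM) * l2 v :=
        add_le_add (add_le_add h₁ h₂) h₃
    _ = _ := by ring

theorem alpha_upper_bound {M N K : ℕ} (Φ : Matrix (Fin M) (Fin N) ℝ)
    (x : Fin N → ℝ) (T S : Finset (Fin N)) (v y : Fin M → ℝ)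
    (hy : y = Φ.mulVec x + v) (hT : T.card = K) (hsupp : ∀ i, i ∉ T → x i = 0)
    (hS : S ⊂ T) (δK δK1 δM : ℝ) (hδK0 : 0 ≤ δK) (hδK1 : δK < 1)
    (hδK10 : 0 ≤ δK1) (hδK11 : δK1 < 1) (hδM0 : 0 ≤ δM) (hδM1 : δM < 1)
    (hRIPK : RIP Φ K δK) (hRIPK1 : RIP Φ (K + 1) δK1) (hRIPM : RIP Φ M δM) :
    ∀ j, j ∉ T →
      |(fun i => Φ i j) ⬝ᵥ resid Φ S y| ≤
        (δK1 + δK1 * δK / (1 - δK)) * l2 (restr x (T \ S)) +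
          Real.sqrt (1 + δM) * l2 v :=
  alpha_upper_bound_general Φ x T S v y hy hT hsupp hS δK δK1 δM hδK0 hδK1 hδK10 hRIPK hRIPK1 hRIPM
end
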